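/- A diversified ∧∨-equivalence A ↔ B is a tautology if and only if it is a theorem of the formal system S_{∧,∨} generated by reflexivity, associativity and commutativity of ∧ and ∨, symmetry, transitivity, and congruence rules for ∧ and ∨. -/
import Mathlib


inductive Form where
  | var : ℕ → Form
  | top : Form
  | bot : Form
  | neg : Form → Form
  | and : Form → Form → Form
  | or  : Form → Form → Form
deriving DecidableEq

namespace Form

def eval (v : ℕ → Bool) : Form → Bool
  | var n => v n
  | top => true
  | bot => false
  | neg A => !(A.eval v)
  | and A B => A.eval v && B.eval v
  | or A B => A.eval v || B.eval v

def letters : Form → Multiset ℕ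
  | var n => {n}
  | top => 0
  | bot => 0
  | neg A => A.letters
  | and A B => A.letters + B.letters
  | or A B => A.letters + B.letters

end Form

/-- `A ↔ B` is a tautology. -/
def TautEquiv (A B : Form) : Prop := ∀ v : ℕ → Bool, A.eval v = B.eval v

/-- `A` is a tautology. -/
def Taut (A : Form) : Prop := ∀ v : ℕ → Bool, A.eval v = true

/-- every letter occurs at most once -/
def Diversified (A : Form) : Prop := A.letters.Nodup

/-- built from letters using only ∧ and ∨ -/
def IsAndOr : Form → Prop
  | .var _ => True
  | .and A B => IsAndOr A ∧ IsAndOr B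
  | .or A B => IsAndOr A ∧ IsAndOr B
  | _ => False

/-- the formal system S_{∧,∨} -/
inductive Sder : Form → Form → Prop
  | refl (A : Form) : Sder A A
  | assocAnd (A B C : Form) : Sder ((A.and B).and C) (A.and (B.and C))
  | assocOr  (A B C : Form) : Sder ((A.or B).or C) (A.or (B.or C))
  | commAnd (A B : Form) : Sder (A.and B) (B.and A)
  | commOr  (A B : Form) : Sder (A.or B) (B.or A)
  | symm : Sder A B → Sder B A
  | trans : Sder A B → Sder B C → Sder A C
  | congAnd : Sder A B → Sder C D → Sder (A.and C) (B.and D)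
  | congOr  : Sder A B → Sder C D → Sder (A.or C) (B.or D)

-- ===================== soundness =====================
lemma sder_sound {A B : Form} (h : Sder A B) : TautEquiv A B := by
  induction h with
  | refl A => intro v; rfl
  | assocAnd A B C => intro v; simp [Form.eval, Bool.and_assoc]
  | assocOr A B C => intro v; simp [Form.eval, Bool.or_assoc]
  | commAnd A B => intro v; simp [Form.eval, Bool.and_comm]
  | commOr A B => intro v; simp [Form.eval, Bool.or_comm]
  | symm h ih => intro v; exact (ih v).symm
  | trans h1 h2 ih1 ih2 => intro v; exact (ih1 v).trans (ih2 v)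
  | congAnd h1 h2 ih1 ih2 => intro v; simp [Form.eval, ih1 v, ih2 v]
  | congOr h1 h2 ih1 ih2 => intro v; simp [Form.eval, ih1 v, ih2 v]

-- ===================== basics =====================
namespace Form
def size : Form → ℕ
  | var _ => 1
  | top => 1
  | bot => 1
  | neg A => A.size + 1
  | and A B => A.size + B.size + 1
  | or A B => A.size + B.size + 1
end Form

open Form

lemma size_pos (A : Form) : 1 ≤ A.size := by
  cases A <;> simp [Form.size]

lemma eval_congr {A : Form} {v w : ℕ → Bool} (h : ∀ n ∈ A.letters, v n = w n) :
    A.eval v = A.eval w := by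
  induction A with
  | var n => exact h n (by simp [Form.letters])
  | top => rfl
  | bot => rfl
  | neg A ih => simp only [Form.eval]; rw [ih (fun n hn => h n hn)]
  | and A B ihA ihB =>
    simp only [Form.eval]
    rw [ihA (fun n hn => h n (by simp [Form.letters, hn])),
        ihB (fun n hn => h n (by simp [Form.letters, hn]))]
  | or A B ihA ihB =>
    simp only [Form.eval]
    rw [ihA (fun n hn => h n (by simp [Form.letters, hn])),
        ihB (fun n hn => h n (by simp [Form.letters, hn]))]

lemma eval_update_of_notMem {A : Form} {x : ℕ} {v : ℕ → Bool} {b : Bool}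
    (h : x ∉ A.letters) : A.eval (Function.update v x b) = A.eval v :=
  eval_congr (fun n hn => Function.update_of_ne (by rintro rfl; exact h hn) _ _)

lemma eval_allFalse {A : Form} (hA : IsAndOr A) {v : ℕ → Bool}
    (h : ∀ n ∈ A.letters, v n = false) : A.eval v = false := by
  induction A with
  | var n => exact h n (by simp [Form.letters])
  | top => exact hA.elim
  | bot => rfl
  | neg A ih => exact hA.elim
  | and A B ihA ihB =>
    simp only [Form.eval]
    rw [ihA hA.1 (fun n hn => h n (by simp [Form.letters, hn]))]; rfl
  | or A B ihA ihB =>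
    simp only [Form.eval]
    rw [ihA hA.1 (fun n hn => h n (by simp [Form.letters, hn])),
        ihB hA.2 (fun n hn => h n (by simp [Form.letters, hn]))]; rfl

lemma eval_allTrue {A : Form} (hA : IsAndOr A) {v : ℕ → Bool}
    (h : ∀ n ∈ A.letters, v n = true) : A.eval v = true := by
  induction A with
  | var n => exact h n (by simp [Form.letters])
  | top => rfl
  | bot => exact hA.elim
  | neg A ih => exact hA.elim
  | and A B ihA ihB =>
    simp only [Form.eval]
    rw [ihA hA.1 (fun n hn => h n (by simp [Form.letters, hn])),
        ihB hA.2 (fun n hn => h n (by simp [Form.letters, hn]))]; rfl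
  | or A B ihA ihB =>
    simp only [Form.eval]
    rw [ihA hA.1 (fun n hn => h n (by simp [Form.letters, hn]))]; rfl

lemma letters_nonempty {A : Form} (hA : IsAndOr A) : ∃ n, n ∈ A.letters := by
  induction A with
  | var n => exact ⟨n, by simp [Form.letters]⟩
  | top => exact hA.elim
  | bot => exact hA.elim
  | neg A ih => exact hA.elim
  | and A B ihA ihB =>
    obtain ⟨n, hn⟩ := ihA hA.1; exact ⟨n, by simp [Form.letters, hn]⟩
  | or A B ihA ihB =>
    obtain ⟨n, hn⟩ := ihA hA.1; exact ⟨n, by simp [Form.letters, hn]⟩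

lemma div_node {A B : Form} (h : ((A.letters + B.letters) : Multiset ℕ).Nodup) :
    A.letters.Nodup ∧ B.letters.Nodup ∧ ∀ a ∈ A.letters, a ∉ B.letters := by
  have h' := Multiset.nodup_add.1 h
  exact ⟨h'.1, h'.2.1, fun a ha hb => (Multiset.disjoint_left.mp h'.2.2) ha hb⟩

section Override
variable {A : Form} {S : Multiset ℕ} {v w : ℕ → Bool} {x : ℕ} {b : Bool}

/-- override on `S` by `w`, elsewhere `v` -/
noncomputable def ovr (S : Multiset ℕ) (w v : ℕ → Bool) : ℕ → Bool :=
  fun n => if n ∈ S then w n else v n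

lemma eval_ovr_out (hdis : ∀ a ∈ A.letters, a ∉ S) :
    A.eval (ovr S w v) = A.eval v :=
  eval_congr fun n hn => if_neg (hdis n hn)

lemma eval_ovr_in (hsub : ∀ a ∈ A.letters, a ∈ S) :
    A.eval (ovr S w v) = A.eval w :=
  eval_congr fun n hn => if_pos (hsub n hn)

lemma eval_update_ovr_out (hdis : ∀ a ∈ A.letters, a ∉ S) :
    A.eval (Function.update (ovr S w v) x b) = A.eval (Function.update v x b) := by
  apply eval_congr; intro n hn
  by_cases hnx : n = x
  · subst hnx; simp
  · rw [Function.update_of_ne hnx, Function.update_of_ne hnx]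
    exact if_neg (hdis n hn)

lemma eval_update_ovr_in (hsub : ∀ a ∈ A.letters, a ∈ S) :
    A.eval (Function.update (ovr S w v) x b) = A.eval (Function.update w x b) := by
  apply eval_congr; intro n hn
  by_cases hnx : n = x
  · subst hnx; simp
  · rw [Function.update_of_ne hnx, Function.update_of_ne hnx]
    exact if_pos (hsub n hn)

end Override

-- dependence: a diversified and-or formula depends on each of its letters
lemma exists_dep {A : Form} (hA : IsAndOr A) (hd : Diversified A) {x : ℕ}
    (hx : x ∈ A.letters) :
    ∃ v, A.eval v = true ∧ A.eval (Function.update v x false) = false := by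
  induction A with
  | var n =>
    refine ⟨fun _ => true, rfl, ?_⟩
    have : x = n := by simpa [Form.letters] using hx
    subst this; simp [Form.eval]
  | top => exact hA.elim
  | bot => exact hA.elim
  | neg A ih => exact hA.elim
  | and A B ihA ihB =>
    obtain ⟨hdA, hdB, hdis⟩ := div_node hd
    have hdis' : ∀ a ∈ B.letters, a ∉ A.letters := fun a ha hb => hdis a hb ha
    simp only [Form.letters, Multiset.mem_add] at hx
    rcases hx with hx | hx
    · obtain ⟨v, hv1, hv2⟩ := ihA hA.1 hdA hx
      refine ⟨ovr B.letters (fun _ => true) v, ?_, ?_⟩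
      · simp only [Form.eval]
        rw [eval_ovr_out hdis, hv1, eval_ovr_in (fun a ha => ha)]
        rw [eval_allTrue hA.2 (fun n _ => rfl)]; rfl
      · simp only [Form.eval]
        rw [eval_update_ovr_out hdis, hv2]; rfl
    · obtain ⟨v, hv1, hv2⟩ := ihB hA.2 hdB hx
      refine ⟨ovr A.letters (fun _ => true) v, ?_, ?_⟩
      · simp only [Form.eval]
        rw [eval_ovr_out hdis', hv1, eval_ovr_in (A := A) (fun a ha => ha)]
        rw [eval_allTrue hA.1 (fun n _ => rfl)]; rfl
      · simp only [Form.eval]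
        rw [eval_update_ovr_out hdis', hv2]; simp
  | or A B ihA ihB =>
    obtain ⟨hdA, hdB, hdis⟩ := div_node hd
    have hdis' : ∀ a ∈ B.letters, a ∉ A.letters := fun a ha hb => hdis a hb ha
    simp only [Form.letters, Multiset.mem_add] at hx
    rcases hx with hx | hx
    · obtain ⟨v, hv1, hv2⟩ := ihA hA.1 hdA hx
      refine ⟨ovr B.letters (fun _ => false) v, ?_, ?_⟩
      · simp only [Form.eval]
        rw [eval_ovr_out hdis, hv1]; rfl
      · simp only [Form.eval]
        rw [eval_update_ovr_out hdis, hv2]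
        have : B.eval (Function.update (ovr B.letters (fun _ => false) v) x false) = false := by
          rw [eval_update_ovr_in (fun a ha => ha)]
          exact eval_allFalse hA.2 (fun n hn => by
            by_cases hnx : n = x
            · subst hnx; simp
            · rw [Function.update_of_ne hnx])
        rw [this]; rfl
    · obtain ⟨v, hv1, hv2⟩ := ihB hA.2 hdB hx
      refine ⟨ovr A.letters (fun _ => false) v, ?_, ?_⟩
      · simp only [Form.eval]
        rw [eval_ovr_out hdis', hv1]; simp
      · simp only [Form.eval]
        rw [eval_update_ovr_out hdis', hv2]
        have : A.eval (Function.update (ovr A.letters (fun _ => false) v) x false) = false := by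
          rw [eval_update_ovr_in (A := A) (fun a ha => ha)]
          exact eval_allFalse hA.1 (fun n hn => by
            by_cases hnx : n = x
            · subst hnx; simp
            · rw [Function.update_of_ne hnx])
        rw [this]; rfl
-- ===================== the connection relation =====================

/-- `x` and `y` lie on a common prime implicant (semantic notion). -/
def ConnAnd (A : Form) (x y : ℕ) : Prop :=
  ∃ v, A.eval v = true ∧ A.eval (Function.update v x false) = false ∧
       A.eval (Function.update v y false) = false

def Conn2 (A : Form) (x y : ℕ) : Prop := ∃ z, ConnAnd A x z ∧ ConnAnd A z y

lemma connAnd_symm {A : Form} {x y : ℕ} (h : ConnAnd A x y) : ConnAnd A y x := by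
  obtain ⟨v, h1, h2, h3⟩ := h; exact ⟨v, h1, h3, h2⟩

lemma connAnd_congr {A B : Form} (h : TautEquiv A B) {x y : ℕ} :
    ConnAnd A x y → ConnAnd B x y := by
  rintro ⟨v, h1, h2, h3⟩
  exact ⟨v, (h v) ▸ h1, (h _) ▸ h2, (h _) ▸ h3⟩

lemma conn2_congr {A B : Form} (h : TautEquiv A B) {x y : ℕ} :
    Conn2 A x y → Conn2 B x y := by
  rintro ⟨z, h1, h2⟩; exact ⟨z, connAnd_congr h h1, connAnd_congr h h2⟩

lemma connAnd_mem {A : Form} {x y : ℕ} (h : ConnAnd A x y) :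
    x ∈ A.letters ∧ y ∈ A.letters := by
  obtain ⟨v, h1, h2, h3⟩ := h
  constructor
  · by_contra hc
    rw [eval_update_of_notMem hc, h1] at h2; exact Bool.noConfusion h2
  · by_contra hc
    rw [eval_update_of_notMem hc, h1] at h3; exact Bool.noConfusion h3

lemma connAnd_self {A : Form} (hA : IsAndOr A) (hd : Diversified A) {x : ℕ}
    (hx : x ∈ A.letters) : ConnAnd A x x := by
  obtain ⟨v, h1, h2⟩ := exists_dep hA hd hx
  exact ⟨v, h1, h2, h2⟩

lemma mem_letters_iff_connAnd_self {A : Form} (hA : IsAndOr A) (hd : Diversified A) {x : ℕ} :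
    x ∈ A.letters ↔ ConnAnd A x x :=
  ⟨connAnd_self hA hd, fun h => (connAnd_mem h).1⟩

/-- crossing an ∧-node connects the two sides -/
lemma connAnd_cross {A B : Form} (hA : IsAndOr A) (hB : IsAndOr B)
    (hd : Diversified (A.and B)) {x y : ℕ} (hx : x ∈ A.letters) (hy : y ∈ B.letters) :
    ConnAnd (A.and B) x y := by
  obtain ⟨hdA, hdB, hdis⟩ := div_node (A := A) (B := B) hd
  obtain ⟨v1, hv1, hv2⟩ := exists_dep hA hdA hx
  obtain ⟨w1, hw1, hw2⟩ := exists_dep hB hdB hy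
  refine ⟨ovr B.letters w1 v1, ?_, ?_, ?_⟩
  · simp only [Form.eval]
    rw [eval_ovr_out hdis, eval_ovr_in (fun a ha => ha), hv1, hw1]; rfl
  · simp only [Form.eval]
    rw [eval_update_ovr_out hdis, hv2]; rfl
  · simp only [Form.eval]
    rw [eval_update_ovr_in (fun a ha => ha), hw2]; simp
/-- the connection relation of an ∨-node splits -/
lemma connAnd_or_iff {A B : Form} (hA : IsAndOr A) (hB : IsAndOr B)
    (hd : Diversified (A.or B)) {x y : ℕ} :
    ConnAnd (A.or B) x y ↔ ConnAnd A x y ∨ ConnAnd B x y := by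
  obtain ⟨hdA, hdB, hdis⟩ := div_node (A := A) (B := B) hd
  have hdis' : ∀ a ∈ B.letters, a ∉ A.letters := fun a ha hb => hdis a hb ha
  constructor
  · rintro ⟨v, h1, h2, h3⟩
    simp only [Form.eval, Bool.or_eq_true, Bool.or_eq_false_iff] at h1 h2 h3
    rcases h1 with h1 | h1
    · left
      exact ⟨v, h1, h2.1, h3.1⟩
    · right
      exact ⟨v, h1, h2.2, h3.2⟩
  · rintro (⟨v, h1, h2, h3⟩ | ⟨v, h1, h2, h3⟩)
    · have hxA : x ∈ A.letters := (connAnd_mem ⟨v, h1, h2, h3⟩).1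
      have hyA : y ∈ A.letters := (connAnd_mem ⟨v, h1, h2, h3⟩).2
      refine ⟨ovr B.letters (fun _ => false) v, ?_, ?_, ?_⟩
      · simp only [Form.eval]; rw [eval_ovr_out hdis, h1]; rfl
      · simp only [Form.eval]
        rw [eval_update_ovr_out hdis, h2, eval_update_ovr_in (fun a ha => ha),
          eval_allFalse hB (fun n hn => by
            by_cases hnx : n = x
            · exact absurd (hnx ▸ hn) (hdis x hxA)
            · rw [Function.update_of_ne hnx])]
        rfl
      · simp only [Form.eval]
        rw [eval_update_ovr_out hdis, h3, eval_update_ovr_in (fun a ha => ha),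
          eval_allFalse hB (fun n hn => by
            by_cases hnx : n = y
            · exact absurd (hnx ▸ hn) (hdis y hyA)
            · rw [Function.update_of_ne hnx])]
        rfl
    · have hxB : x ∈ B.letters := (connAnd_mem ⟨v, h1, h2, h3⟩).1
      have hyB : y ∈ B.letters := (connAnd_mem ⟨v, h1, h2, h3⟩).2
      refine ⟨ovr A.letters (fun _ => false) v, ?_, ?_, ?_⟩
      · simp only [Form.eval]; rw [eval_ovr_out hdis', h1]; simp
      · simp only [Form.eval]
        rw [eval_update_ovr_out hdis', h2, eval_update_ovr_in (A := A) (fun a ha => ha),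
          eval_allFalse hA (fun n hn => by
            by_cases hnx : n = x
            · exact absurd (hnx ▸ hn) (hdis' x hxB)
            · rw [Function.update_of_ne hnx])]
        rfl
      · simp only [Form.eval]
        rw [eval_update_ovr_out hdis', h3, eval_update_ovr_in (A := A) (fun a ha => ha),
          eval_allFalse hA (fun n hn => by
            by_cases hnx : n = y
            · exact absurd (hnx ▸ hn) (hdis' y hyB)
            · rw [Function.update_of_ne hnx])]
        rfl

def IsOrNode : Form → Prop
  | .or _ _ => True
  | _ => False

/-- within a non-∨ diversified and-or formula, any two letters are 2-step connected -/
lemma conn2_of_nonOr {F : Form} (hF : IsAndOr F) (hno : ¬ IsOrNode F)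
    (hd : Diversified F) {x y : ℕ} (hx : x ∈ F.letters) (hy : y ∈ F.letters) :
    Conn2 F x y := by
  cases F with
  | var n =>
    have hx' : x = n := by simpa [Form.letters] using hx
    have hy' : y = n := by simpa [Form.letters] using hy
    have e : x = y := hx'.trans hy'.symm
    refine ⟨x, connAnd_self hF hd hx, ?_⟩
    rw [← e]
    exact connAnd_self hF hd hx
  | top => exact hF.elim
  | bot => exact hF.elim
  | neg A => exact hF.elim
  | or A B => exact absurd trivial hno
  | and A B =>
    obtain ⟨hdA, hdB, hdis⟩ := div_node (A := A) (B := B) hd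
    simp only [Form.letters, Multiset.mem_add] at hx hy
    rcases hx with hx | hx <;> rcases hy with hy | hy
    · obtain ⟨z, hz⟩ := letters_nonempty hF.2
      exact ⟨z, connAnd_cross hF.1 hF.2 hd hx hz,
             connAnd_symm (connAnd_cross hF.1 hF.2 hd hy hz)⟩
    · exact ⟨y, connAnd_cross hF.1 hF.2 hd hx hy,
             connAnd_self hF hd (by simp [Form.letters, hy])⟩
    · exact ⟨x, connAnd_self hF hd (by simp [Form.letters, hx]),
             connAnd_symm (connAnd_cross hF.1 hF.2 hd hy hx)⟩
    · obtain ⟨z, hz⟩ := letters_nonempty hF.1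
      exact ⟨z, connAnd_symm (connAnd_cross hF.1 hF.2 hd hz hx),
             connAnd_cross hF.1 hF.2 hd hz hy⟩
-- ===================== or-flattening =====================

def orAll : List Form → Form
  | [] => .bot
  | [A] => A
  | A :: B :: l => A.or (orAll (B :: l))

lemma orAll_cons {A : Form} {l : List Form} (h : l ≠ []) :
    orAll (A :: l) = A.or (orAll l) := by
  cases l with
  | nil => exact absurd rfl h
  | cons B t => rfl

def orFactors : Form → List Form
  | .or A B => orFactors A ++ orFactors B
  | A => [A]

lemma orFactors_ne_nil (A : Form) : orFactors A ≠ [] := by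
  cases A with
  | or A B =>
    simp only [orFactors, ne_eq, List.append_eq_nil_iff]
    rintro ⟨h, -⟩; exact orFactors_ne_nil A h
  | var n => simp [orFactors]
  | top => simp [orFactors]
  | bot => simp [orFactors]
  | neg A => simp [orFactors]
  | and A B => simp [orFactors]

lemma orFactors_mem {A : Form} (hA : IsAndOr A) {F : Form} (hF : F ∈ orFactors A) :
    IsAndOr F ∧ ¬ IsOrNode F := by
  cases A with
  | var n => simp [orFactors] at hF; subst hF; exact ⟨trivial, fun h => h.elim⟩
  | top => exact hA.elim
  | bot => exact hA.elim
  | neg A => exact hA.elim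
  | and A B => simp [orFactors] at hF; subst hF; exact ⟨hA, fun h => h.elim⟩
  | or A B =>
    simp only [orFactors, List.mem_append] at hF
    rcases hF with h | h
    · exact orFactors_mem hA.1 h
    · exact orFactors_mem hA.2 h

lemma orFactors_letters (A : Form) :
    ((orFactors A).map Form.letters).sum = A.letters := by
  cases A with
  | or A B =>
    simp only [orFactors, List.map_append, List.sum_append,
      orFactors_letters A, orFactors_letters B]
    rfl
  | var n => simp [orFactors]
  | top => simp [orFactors]
  | bot => simp [orFactors]
  | neg A => simp [orFactors]
  | and A B => simp [orFactors]

lemma orFactors_size {A : Form} {F : Form} (hF : F ∈ orFactors A) :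
    F.size ≤ A.size := by
  cases A with
  | or A B =>
    simp only [orFactors, List.mem_append] at hF
    rcases hF with h | h
    · have := orFactors_size h; simp [Form.size]; omega
    · have := orFactors_size h; simp [Form.size]; omega
  | var n => simp [orFactors] at hF; subst hF; exact le_refl _
  | top => simp [orFactors] at hF; subst hF; exact le_refl _
  | bot => simp [orFactors] at hF; subst hF; exact le_refl _
  | neg A => simp [orFactors] at hF; subst hF; exact le_refl _
  | and A B => simp [orFactors] at hF; subst hF; exact le_refl _

lemma sder_orAll_append {l1 l2 : List Form} (h1 : l1 ≠ []) (h2 : l2 ≠ []) :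
    Sder (orAll (l1 ++ l2)) ((orAll l1).or (orAll l2)) := by
  cases l1 with
  | nil => exact absurd rfl h1
  | cons A t =>
    cases t with
    | nil => simp only [List.cons_append, List.nil_append]
             rw [orAll_cons h2]; exact Sder.refl _
    | cons B s =>
      have ht : (B :: s : List Form) ≠ [] := by simp
      have htl : (B :: s) ++ l2 ≠ [] := by simp
      rw [List.cons_append, orAll_cons htl, orAll_cons ht]
      exact Sder.trans (Sder.congOr (Sder.refl A) (sder_orAll_append ht h2))
        (Sder.symm (Sder.assocOr _ _ _))

lemma sder_orFactors (A : Form) : Sder A (orAll (orFactors A)) := by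
  cases A with
  | or A B =>
    exact Sder.trans (Sder.congOr (sder_orFactors A) (sder_orFactors B))
      (Sder.symm (sder_orAll_append (orFactors_ne_nil A) (orFactors_ne_nil B)))
  | var n => exact Sder.refl _
  | top => exact Sder.refl _
  | bot => exact Sder.refl _
  | neg A => exact Sder.refl _
  | and A B => exact Sder.refl _

lemma sder_swap (A B C : Form) : Sder (A.or (B.or C)) (B.or (A.or C)) :=
  Sder.trans (Sder.symm (Sder.assocOr _ _ _))
    (Sder.trans (Sder.congOr (Sder.commOr _ _) (Sder.refl _)) (Sder.assocOr _ _ _))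

lemma sder_orAll_perm {l l' : List Form} (p : l.Perm l') (h : l ≠ []) :
    Sder (orAll l) (orAll l') := by
  induction p with
  | nil => exact absurd rfl h
  | cons A p ih =>
    rename_i t t'
    cases t with
    | nil =>
      have : t' = [] := p.symm.eq_nil
      subst this; exact Sder.refl _
    | cons B s =>
      have ht' : t' ≠ [] := fun e => List.cons_ne_nil B s (List.Perm.eq_nil (e ▸ p))
      rw [orAll_cons (List.cons_ne_nil B s), orAll_cons ht']
      exact Sder.congOr (Sder.refl A) (ih (List.cons_ne_nil B s))
  | swap A B t =>
    cases t with
    | nil => exact Sder.commOr _ _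
    | cons C s =>
      rw [orAll_cons (List.cons_ne_nil _ _), orAll_cons (List.cons_ne_nil _ _),
        orAll_cons (List.cons_ne_nil _ _), orAll_cons (List.cons_ne_nil _ _)]
      exact sder_swap _ _ _
  | trans p1 p2 ih1 ih2 =>
    exact Sder.trans (ih1 h) (ih2 (fun e => h (List.Perm.eq_nil (e ▸ p1))))
-- ===================== semantics of or-lists =====================

lemma letters_orAll {l : List Form} (h : l ≠ []) :
    (orAll l).letters = (l.map Form.letters).sum := by
  cases l with
  | nil => exact absurd rfl h
  | cons A t =>
    cases t with
    | nil => simp [orAll]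
    | cons B s =>
      rw [orAll_cons (List.cons_ne_nil B s)]
      simp only [Form.letters, List.map_cons, List.sum_cons]
      rw [letters_orAll (List.cons_ne_nil B s)]
      simp

lemma isAndOr_orAll {l : List Form} (h : l ≠ []) (hl : ∀ F ∈ l, IsAndOr F) :
    IsAndOr (orAll l) := by
  cases l with
  | nil => exact absurd rfl h
  | cons A t =>
    cases t with
    | nil => exact hl A (by simp)
    | cons B s =>
      rw [orAll_cons (List.cons_ne_nil B s)]
      exact ⟨hl A (by simp), isAndOr_orAll (List.cons_ne_nil B s)
        (fun F hF => hl F (by simp [hF]))⟩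

lemma nodup_add' {s t : Multiset ℕ} (h : (s + t).Nodup) :
    s.Nodup ∧ t.Nodup ∧ ∀ a ∈ s, a ∉ t := by
  have h' := Multiset.nodup_add.1 h
  exact ⟨h'.1, h'.2.1, fun a ha hb => (Multiset.disjoint_left.mp h'.2.2) ha hb⟩

lemma mem_sum_of_mem {l : List Form} {F : Form} (hF : F ∈ l) {x : ℕ}
    (hx : x ∈ F.letters) : x ∈ (l.map Form.letters).sum := by
  induction l with
  | nil => cases hF
  | cons A t ih =>
    simp only [List.map_cons, List.sum_cons, Multiset.mem_add]
    rcases List.mem_cons.mp hF with rfl | h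
    · exact Or.inl hx
    · exact Or.inr (ih h)

lemma exists_factor_of_mem_sum {l : List Form} {x : ℕ}
    (hx : x ∈ (l.map Form.letters).sum) : ∃ F ∈ l, x ∈ F.letters := by
  induction l with
  | nil => simp at hx
  | cons A t ih =>
    simp only [List.map_cons, List.sum_cons, Multiset.mem_add] at hx
    rcases hx with h | h
    · exact ⟨A, by simp, h⟩
    · obtain ⟨F, hF, hxF⟩ := ih h
      exact ⟨F, by simp [hF], hxF⟩

lemma div_of_mem {l : List Form} (hnd : ((l.map Form.letters).sum).Nodup) {F : Form}
    (hF : F ∈ l) : Diversified F := by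
  induction l with
  | nil => cases hF
  | cons A t ih =>
    simp only [List.map_cons, List.sum_cons] at hnd
    obtain ⟨h1, h2, -⟩ := nodup_add' hnd
    rcases List.mem_cons.mp hF with rfl | h
    · exact h1
    · exact ih h2 h

lemma factor_unique {l : List Form} (hnd : ((l.map Form.letters).sum).Nodup)
    {F G : Form} (hF : F ∈ l) (hG : G ∈ l) {x : ℕ}
    (hxF : x ∈ F.letters) (hxG : x ∈ G.letters) : F = G := by
  induction l with
  | nil => cases hF
  | cons A t ih =>
    simp only [List.map_cons, List.sum_cons] at hnd
    obtain ⟨-, h2, hdis⟩ := nodup_add' hnd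
    rcases List.mem_cons.mp hF with rfl | hF' <;> rcases List.mem_cons.mp hG with rfl | hG'
    · rfl
    · exact absurd (mem_sum_of_mem hG' hxG) (hdis x hxF)
    · exact absurd (mem_sum_of_mem hF' hxF) (hdis x hxG)
    · exact ih h2 hF' hG'

lemma connAnd_orAll {l : List Form} (h : l ≠ []) (hl : ∀ F ∈ l, IsAndOr F)
    (hnd : ((l.map Form.letters).sum).Nodup) {x y : ℕ} :
    ConnAnd (orAll l) x y ↔ ∃ F ∈ l, ConnAnd F x y := by
  cases l with
  | nil => exact absurd rfl h
  | cons A t =>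
    cases t with
    | nil => simp [orAll]
    | cons B s =>
      have ht : (B :: s : List Form) ≠ [] := List.cons_ne_nil B s
      rw [orAll_cons ht]
      have hAO : IsAndOr (A.or (orAll (B :: s))) := by
        exact ⟨hl A (by simp), isAndOr_orAll ht (fun F hF => hl F (by simp [hF]))⟩
      have hd : Diversified (A.or (orAll (B :: s))) := by
        unfold Diversified
        simp only [Form.letters, letters_orAll ht]
        simpa using hnd
      rw [connAnd_or_iff hAO.1 hAO.2 hd,
        connAnd_orAll ht (fun F hF => hl F (by simp [hF]))
          (by simp only [List.map_cons, List.sum_cons] at hnd; exact (nodup_add' hnd).2.1)]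
      simp

lemma conn2_orAll {l : List Form} (h : l ≠ []) (hl : ∀ F ∈ l, IsAndOr F ∧ ¬ IsOrNode F)
    (hnd : ((l.map Form.letters).sum).Nodup) {F : Form} (hFl : F ∈ l) {x : ℕ}
    (hx : x ∈ F.letters) {y : ℕ} :
    Conn2 (orAll l) x y ↔ y ∈ F.letters := by
  have hl' : ∀ F ∈ l, IsAndOr F := fun F hF => (hl F hF).1
  constructor
  · rintro ⟨z, c1, c2⟩
    obtain ⟨F1, hF1, hc1⟩ := (connAnd_orAll h hl' hnd).1 c1
    obtain ⟨F2, hF2, hc2⟩ := (connAnd_orAll h hl' hnd).1 c2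
    have e1 : F1 = F := factor_unique hnd hF1 hFl (connAnd_mem hc1).1 hx
    subst e1
    have e2 : F2 = F1 := factor_unique hnd hF2 hFl (connAnd_mem hc2).1 (connAnd_mem hc1).2
    subst e2
    exact (connAnd_mem hc2).2
  · intro hy
    obtain ⟨z, c1, c2⟩ := conn2_of_nonOr (hl F hFl).1 (hl F hFl).2 (div_of_mem hnd hFl) hx hy
    exact ⟨z, (connAnd_orAll h hl' hnd).2 ⟨F, hFl, c1⟩,
           (connAnd_orAll h hl' hnd).2 ⟨F, hFl, c2⟩⟩

lemma mem_letters_orAll_iff_conn2 {l : List Form} (h : l ≠ [])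
    (hl : ∀ F ∈ l, IsAndOr F ∧ ¬ IsOrNode F)
    (hnd : ((l.map Form.letters).sum).Nodup) {x : ℕ} :
    x ∈ (orAll l).letters ↔ Conn2 (orAll l) x x := by
  rw [letters_orAll h]
  constructor
  · intro hx
    obtain ⟨F, hF, hxF⟩ := exists_factor_of_mem_sum hx
    exact (conn2_orAll h hl hnd hF hxF).2 hxF
  · rintro ⟨z, c1, c2⟩
    obtain ⟨F1, hF1, hc1⟩ := (connAnd_orAll h (fun F hF => (hl F hF).1) hnd).1 c1
    exact mem_sum_of_mem hF1 (connAnd_mem hc1).1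
-- ===================== matching or-lists =====================

lemma eval_orAll_false {l : List Form} (h : l ≠ []) {m : ℕ → Bool}
    (hf : ∀ F ∈ l, F.eval m = false) : (orAll l).eval m = false := by
  cases l with
  | nil => exact absurd rfl h
  | cons A t =>
    cases t with
    | nil => exact hf A (by simp)
    | cons B s =>
      rw [orAll_cons (List.cons_ne_nil B s)]
      simp only [Form.eval]
      rw [hf A (by simp), eval_orAll_false (List.cons_ne_nil B s)
        (fun F hF => hf F (by simp [hF]))]
      rfl

lemma eval_orAll_factor {l : List Form} (h : l ≠ []) {F : Form} (hF : F ∈ l)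
    {m : ℕ → Bool} (hother : ∀ F' ∈ l, F' = F ∨ F'.eval m = false) :
    (orAll l).eval m = F.eval m := by
  cases l with
  | nil => exact absurd rfl h
  | cons A t =>
    cases t with
    | nil =>
      obtain rfl : F = A := by simpa using hF
      rfl
    | cons B s =>
      have ht : (B :: s : List Form) ≠ [] := List.cons_ne_nil B s
      rw [orAll_cons ht]
      simp only [Form.eval]
      rcases List.mem_cons.mp hF with rfl | hFt
      · by_cases hFt : F ∈ (B :: s : List Form)
        · rw [eval_orAll_factor ht hFt (fun F' hF' => hother F' (by simp [hF']))]
          simp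
        · rw [eval_orAll_false ht (fun F' hF' => by
            rcases hother F' (by simp [hF']) with rfl | hfalse
            · exact absurd hF' hFt
            · exact hfalse)]
          simp
      · rcases hother A (by simp) with rfl | hfalse
        · by_cases hFt' : A ∈ (B :: s : List Form)
          · rw [eval_orAll_factor ht hFt' (fun F' hF' => hother F' (by simp [hF']))]
            simp
          · rw [eval_orAll_false ht (fun F' hF' => by
              rcases hother F' (by simp [hF']) with rfl | hfalse
              · exact absurd hF' hFt'
              · exact hfalse)]
            simp
        · rw [hfalse, eval_orAll_factor ht hFt (fun F' hF' => hother F' (by simp [hF']))]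
          simp

lemma matchLists : ∀ (k : ℕ) (lA lB : List Form), lA.length ≤ k →
    lA ≠ [] → lB ≠ [] →
    (∀ F ∈ lA, IsAndOr F ∧ ¬ IsOrNode F) → (∀ G ∈ lB, IsAndOr G ∧ ¬ IsOrNode G) →
    ((lA.map Form.letters).sum).Nodup → ((lB.map Form.letters).sum).Nodup →
    (∀ F ∈ lA, ∀ G ∈ lB, TautEquiv F G → Sder F G) →
    TautEquiv (orAll lA) (orAll lB) → Sder (orAll lA) (orAll lB) := by
  intro k
  induction k with
  | zero =>
    intro lA lB hlen hAne _ _ _ _ _ _ _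
    cases lA with
    | nil => exact absurd rfl hAne
    | cons A t => simp at hlen
  | succ k ih =>
    intro lA lB hlen hAne hBne hlA hlB hndA hndB IHfac htaut
    obtain ⟨F, restA, rfl⟩ : ∃ F restA, lA = F :: restA := by
      cases lA with
      | nil => exact absurd rfl hAne
      | cons F t => exact ⟨F, t, rfl⟩
    have hFm : F ∈ F :: restA := by simp
    obtain ⟨x, hx⟩ := letters_nonempty (hlA F hFm).1
    have htaut' : TautEquiv (orAll lB) (orAll (F :: restA)) := fun v => (htaut v).symm
    -- the matching factor G in lB
    have c2B : Conn2 (orAll lB) x x :=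
      conn2_congr htaut ((conn2_orAll hAne hlA hndA hFm hx).2 hx)
    have hxB : x ∈ (orAll lB).letters :=
      (mem_letters_orAll_iff_conn2 hBne hlB hndB).2 c2B
    rw [letters_orAll hBne] at hxB
    obtain ⟨G, hGm, hxG⟩ := exists_factor_of_mem_sum hxB
    -- F and G have the same letters
    have hsets : ∀ y, y ∈ F.letters ↔ y ∈ G.letters := by
      intro y
      rw [← conn2_orAll hAne hlA hndA hFm hx (y := y),
          ← conn2_orAll hBne hlB hndB hGm hxG (y := y)]
      exact ⟨conn2_congr htaut, conn2_congr htaut'⟩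
    -- membership transfer between the two letter multisets
    have hmemiff : ∀ y, y ∈ ((F :: restA).map Form.letters).sum ↔
        y ∈ (lB.map Form.letters).sum := by
      intro y
      rw [← letters_orAll hAne, ← letters_orAll hBne,
        mem_letters_orAll_iff_conn2 hAne hlA hndA,
        mem_letters_orAll_iff_conn2 hBne hlB hndB]
      exact ⟨conn2_congr htaut, conn2_congr htaut'⟩
    -- TautEquiv F G
    have htFG : TautEquiv F G := by
      intro v
      set m := ovr F.letters v (fun _ => false) with hm
      have e1 : F.eval m = F.eval v := eval_ovr_in (fun a ha => ha)
      have e2 : (orAll (F :: restA)).eval m = F.eval m := by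
        apply eval_orAll_factor hAne hFm
        intro F' hF'
        by_cases hFF : F' = F
        · exact Or.inl hFF
        · refine Or.inr (eval_allFalse (hlA F' hF').1 (fun n hn => ?_))
          have hnF : n ∉ F.letters := fun hc => hFF (factor_unique hndA hF' hFm hn hc)
          exact if_neg hnF
      have e3 : (orAll lB).eval m = G.eval m := by
        apply eval_orAll_factor hBne hGm
        intro G' hG'
        by_cases hGG : G' = G
        · exact Or.inl hGG
        · refine Or.inr (eval_allFalse (hlB G' hG').1 (fun n hn => ?_))
          have hnG : n ∉ G.letters := fun hc => hGG (factor_unique hndB hG' hGm hn hc)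
          exact if_neg (fun hc => hnG ((hsets n).1 hc))
      have e4 : G.eval m = G.eval v :=
        eval_congr (fun n hn => if_pos ((hsets n).2 hn))
      rw [← e1, ← e4, e2.symm, e3.symm]
      exact htaut m
    have hSFG : Sder F G := IHfac F hFm G hGm htFG
    cases restA with
    | nil =>
      -- lB must be the single factor G
      have hallG : ∀ G' ∈ lB, G' = G := by
        intro G' hG'
        obtain ⟨y, hy⟩ := letters_nonempty (hlB G' hG').1
        have hyA : y ∈ (([F] : List Form).map Form.letters).sum :=
          (hmemiff y).2 (mem_sum_of_mem hG' hy)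
        have hyF : y ∈ F.letters := by simpa using hyA
        exact factor_unique hndB hG' hGm hy ((hsets y).1 hyF)
      obtain ⟨G', t, rfl⟩ : ∃ G' t, lB = G' :: t := by
        cases lB with
        | nil => exact absurd rfl hBne
        | cons G' t => exact ⟨G', t, rfl⟩
      have hG' : G' = G := hallG G' (by simp)
      have ht : t = [] := by
        cases t with
        | nil => rfl
        | cons G'' s =>
          have h1 : G'' = G := hallG G'' (by simp)
          obtain ⟨y, hy⟩ := letters_nonempty (hlB G'' (by simp)).1
          simp only [List.map_cons, List.sum_cons] at hndB
          obtain ⟨-, -, hdis⟩ := nodup_add' hndB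
          have hyG' : y ∈ G'.letters := by rw [hG', ← h1]; exact hy
          have hX : y ∈ (List.map Form.letters (G'' :: s)).sum := by
            simp only [List.map_cons, List.sum_cons, Multiset.mem_add]
            exact Or.inl hy
          exact (hdis y hyG' hX).elim
      subst ht; subst hG'
      exact hSFG
    | cons C s =>
      have hAne' : (C :: s : List Form) ≠ [] := List.cons_ne_nil C s
      -- disjointness inside lA
      simp only [List.map_cons, List.sum_cons] at hndA
      obtain ⟨hndF, hndA', hdisA⟩ := nodup_add' hndA
      -- lB minus G
      set lB' := lB.erase G with hlB'
      have permB : lB.Perm (G :: lB') := List.perm_cons_erase hGm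
      have hsumB : (lB.map Form.letters).sum = G.letters + (lB'.map Form.letters).sum := by
        have := (permB.map Form.letters).sum_eq
        simpa using this
      have hndGB' := hsumB ▸ hndB
      obtain ⟨hndG, hndB', hdisB⟩ := nodup_add' hndGB'
      have hB'sub : ∀ G' ∈ lB', G' ∈ lB := fun G' h => List.mem_of_mem_erase h
      -- lB' is nonempty
      obtain ⟨y, hyC⟩ := letters_nonempty (hlA C (by simp)).1
      have hyA' : y ∈ ((C :: s : List Form).map Form.letters).sum := mem_sum_of_mem (by simp) hyC
      have hynF : y ∉ F.letters := fun hc => hdisA y hc hyA'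
      have hyB : y ∈ (lB.map Form.letters).sum := by
        refine (hmemiff y).1 ?_
        simp only [List.map_cons, List.sum_cons, Multiset.mem_add]
        exact Or.inr (by simpa using hyA')
      obtain ⟨G'', hG''m, hyG''⟩ := exists_factor_of_mem_sum hyB
      have hG''ne : G'' ≠ G := fun e => hynF ((hsets y).2 (e ▸ hyG''))
      have hB'ne : lB' ≠ [] :=
        List.ne_nil_of_mem ((List.mem_erase_of_ne hG''ne).2 hG''m)
      -- tautological equivalence of the remainders
      have htautR : TautEquiv (orAll (C :: s)) (orAll lB') := by
        intro v
        set m := ovr F.letters (fun _ => false) v with hm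
        have e1 : (orAll (C :: s)).eval m = (orAll (C :: s)).eval v := by
          apply eval_ovr_out
          intro a ha
          rw [letters_orAll hAne'] at ha
          exact fun hc => hdisA a hc ha
        have e2 : (orAll (F :: (C :: s))).eval m = (orAll (C :: s)).eval m := by
          rw [orAll_cons hAne']
          simp only [Form.eval]
          rw [eval_ovr_in (fun a ha => ha), eval_allFalse (hlA F hFm).1 (fun n _ => rfl)]
          simp
        have e3 : (orAll lB).eval m = (orAll (G :: lB')).eval m :=
          sder_sound (sder_orAll_perm permB hBne) m
        have e4g : G.eval m = false := by
          rw [hm]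
          exact eval_allFalse (hlB G hGm).1 (fun n hn => if_pos ((hsets n).2 hn))
        have e4 : (orAll (G :: lB')).eval m = (orAll lB').eval m := by
          rw [orAll_cons hB'ne]
          simp only [Form.eval]
          rw [e4g]
          simp
        have e5 : (orAll lB').eval m = (orAll lB').eval v := by
          apply eval_ovr_out
          intro a ha
          rw [letters_orAll hB'ne] at ha
          exact fun hc => hdisB a ((hsets a).1 hc) ha
        rw [← e1, ← e5, ← e2, ← e4, ← e3]
        exact htaut m
      -- recursive call
      have hrec : Sder (orAll (C :: s)) (orAll lB') := by
        apply ih (C :: s) lB' (by simp at hlen ⊢; omega)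
          hAne' hB'ne
          (fun F' hF' => hlA F' (by simp [hF']))
          (fun G' hG' => hlB G' (hB'sub G' hG'))
          hndA' hndB'
          (fun F' hF' G' hG' ht => IHfac F' (by simp [hF']) G' (hB'sub G' hG') ht)
          htautR
      -- assemble
      have step1 : Sder (orAll (F :: (C :: s))) (orAll (G :: lB')) := by
        rw [orAll_cons hAne', orAll_cons hB'ne]
        exact Sder.congOr hSFG hrec
      exact Sder.trans step1 (sder_orAll_perm permB.symm (List.cons_ne_nil _ _))
-- ===================== duality =====================
namespace Form
def dual : Form → Form
  | var n => var n
  | top => bot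
  | bot => top
  | neg A => neg (dual A)
  | and A B => or (dual A) (dual B)
  | or A B => and (dual A) (dual B)
end Form

lemma dual_dual (A : Form) : A.dual.dual = A := by
  induction A <;> simp [Form.dual, *]

lemma letters_dual (A : Form) : A.dual.letters = A.letters := by
  induction A <;> simp [Form.dual, Form.letters, *]

lemma size_dual (A : Form) : A.dual.size = A.size := by
  induction A <;> simp [Form.dual, Form.size, *]

lemma isAndOr_dual {A : Form} (h : IsAndOr A) : IsAndOr A.dual := by
  induction A with
  | var n => trivial
  | top => exact h.elim
  | bot => exact h.elim
  | neg A ih => exact h.elim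
  | and A B ihA ihB => exact ⟨ihA h.1, ihB h.2⟩
  | or A B ihA ihB => exact ⟨ihA h.1, ihB h.2⟩

lemma eval_dual (A : Form) (v : ℕ → Bool) :
    A.dual.eval v = !(A.eval (fun n => !(v n))) := by
  induction A with
  | var n => simp [Form.dual, Form.eval]
  | top => simp [Form.dual, Form.eval]
  | bot => simp [Form.dual, Form.eval]
  | neg A ih => simp [Form.dual, Form.eval, ih]
  | and A B ihA ihB => simp [Form.dual, Form.eval, ihA, ihB]
  | or A B ihA ihB => simp [Form.dual, Form.eval, ihA, ihB]

lemma sder_dual {A B : Form} (h : Sder A B) : Sder A.dual B.dual := by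
  induction h with
  | refl A => exact Sder.refl _
  | assocAnd A B C => exact Sder.assocOr _ _ _
  | assocOr A B C => exact Sder.assocAnd _ _ _
  | commAnd A B => exact Sder.commOr _ _
  | commOr A B => exact Sder.commAnd _ _
  | symm h ih => exact Sder.symm ih
  | trans h1 h2 ih1 ih2 => exact Sder.trans ih1 ih2
  | congAnd h1 h2 ih1 ih2 => exact Sder.congOr ih1 ih2
  | congOr h1 h2 ih1 ih2 => exact Sder.congAnd ih1 ih2

lemma tautEquiv_dual {A B : Form} (h : TautEquiv A B) : TautEquiv A.dual B.dual := by
  intro v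
  rw [eval_dual, eval_dual, h]

-- ===================== endgame lemmas =====================

lemma letters_iff_of_taut {A B : Form} (hA : IsAndOr A) (hB : IsAndOr B)
    (hdA : Diversified A) (hdB : Diversified B) (h : TautEquiv A B) :
    ∀ y, y ∈ A.letters ↔ y ∈ B.letters := by
  intro y
  rw [mem_letters_iff_connAnd_self hA hdA, mem_letters_iff_connAnd_self hB hdB]
  exact ⟨connAnd_congr h, connAnd_congr (fun v => (h v).symm)⟩

lemma eq_var {B : Form} (hB : IsAndOr B) (hdB : Diversified B) {x : ℕ}
    (hset : ∀ y, y ∈ B.letters ↔ y = x) : B = Form.var x := by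
  cases B with
  | var n =>
    have : n = x := (hset n).1 (by simp [Form.letters])
    rw [this]
  | top => exact hB.elim
  | bot => exact hB.elim
  | neg A => exact hB.elim
  | and B1 B2 =>
    obtain ⟨y1, hy1⟩ := letters_nonempty hB.1
    obtain ⟨y2, hy2⟩ := letters_nonempty hB.2
    obtain ⟨-, -, hdis⟩ := div_node (A := B1) (B := B2) hdB
    have e1 : y1 = x := (hset y1).1 (by simp [Form.letters, hy1])
    have e2 : y2 = x := (hset y2).1 (by simp [Form.letters, hy2])
    subst e1; subst e2
    exact absurd hy2 (hdis _ hy1)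
  | or B1 B2 =>
    obtain ⟨y1, hy1⟩ := letters_nonempty hB.1
    obtain ⟨y2, hy2⟩ := letters_nonempty hB.2
    obtain ⟨-, -, hdis⟩ := div_node (A := B1) (B := B2) hdB
    have e1 : y1 = x := (hset y1).1 (by simp [Form.letters, hy1])
    have e2 : y2 = x := (hset y2).1 (by simp [Form.letters, hy2])
    subst e1; subst e2
    exact absurd hy2 (hdis _ hy1)

/-- an ∨-node cannot be equivalent to a non-∨ diversified and-or formula -/
lemma no_mix {A1 A2 B : Form} (hA : IsAndOr (A1.or A2)) (hB : IsAndOr B)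
    (hBno : ¬ IsOrNode B) (hdA : Diversified (A1.or A2)) (hdB : Diversified B)
    (h : TautEquiv (A1.or A2) B) : False := by
  obtain ⟨hd1, hd2, hdis⟩ := div_node (A := A1) (B := A2) hdA
  obtain ⟨x, hx1⟩ := letters_nonempty hA.1
  obtain ⟨y, hy2⟩ := letters_nonempty hA.2
  have hlet := letters_iff_of_taut hA hB hdA hdB h
  have hxB : x ∈ B.letters := (hlet x).1 (by simp [Form.letters, hx1])
  have hyB : y ∈ B.letters := (hlet y).1 (by simp [Form.letters, hy2])
  have c2 : Conn2 (A1.or A2) x y :=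
    conn2_congr (fun v => (h v).symm) (conn2_of_nonOr hB hBno hdB hxB hyB)
  obtain ⟨z, c1, c2'⟩ := c2
  rcases (connAnd_or_iff hA.1 hA.2 hdA).1 c1 with h1 | h1
  · have hz1 : z ∈ A1.letters := (connAnd_mem h1).2
    rcases (connAnd_or_iff hA.1 hA.2 hdA).1 c2' with h2 | h2
    · exact hdis y (connAnd_mem h2).2 hy2
    · exact hdis z hz1 (connAnd_mem h2).1
  · exact hdis x hx1 (connAnd_mem h1).1

/-- the ∨/∨ case, in a form applicable to duals as well -/
lemma orCase {A B : Form} (hA : IsAndOr A) (hB : IsAndOr B)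
    (hdA : Diversified A) (hdB : Diversified B)
    (hAor : IsOrNode A) (hBor : IsOrNode B) (ht : TautEquiv A B)
    (IHfac : ∀ F G, IsAndOr F → IsAndOr G → Diversified F → Diversified G →
      F.size + 2 ≤ A.size → G.size + 2 ≤ B.size → TautEquiv F G → Sder F G) :
    Sder A B := by
  have hndA : ((orFactors A).map Form.letters).sum.Nodup := by
    rw [orFactors_letters]; exact hdA
  have hndB : ((orFactors B).map Form.letters).sum.Nodup := by
    rw [orFactors_letters]; exact hdB
  have htl : TautEquiv (orAll (orFactors A)) (orAll (orFactors B)) := by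
    intro v
    rw [← sder_sound (sder_orFactors A) v, ← sder_sound (sder_orFactors B) v]
    exact ht v
  have hsizeA : ∀ F ∈ orFactors A, F.size + 2 ≤ A.size := by
    intro F hF
    cases A with
    | or A1 A2 =>
      simp only [orFactors, List.mem_append] at hF
      have p1 := size_pos A1
      have p2 := size_pos A2
      rcases hF with h | h
      · have := orFactors_size h; simp only [Form.size]; omega
      · have := orFactors_size h; simp only [Form.size]; omega
    | var n => exact hAor.elim
    | top => exact hAor.elim
    | bot => exact hAor.elim
    | neg A => exact hAor.elim
    | and A1 A2 => exact hAor.elim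
  have hsizeB : ∀ G ∈ orFactors B, G.size + 2 ≤ B.size := by
    intro G hG
    cases B with
    | or B1 B2 =>
      simp only [orFactors, List.mem_append] at hG
      have p1 := size_pos B1
      have p2 := size_pos B2
      rcases hG with h | h
      · have := orFactors_size h; simp only [Form.size]; omega
      · have := orFactors_size h; simp only [Form.size]; omega
    | var n => exact hBor.elim
    | top => exact hBor.elim
    | bot => exact hBor.elim
    | neg B => exact hBor.elim
    | and B1 B2 => exact hBor.elim
  have hmain : Sder (orAll (orFactors A)) (orAll (orFactors B)) := by
    apply matchLists (orFactors A).length _ _ le_rfl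
      (orFactors_ne_nil A) (orFactors_ne_nil B)
      (fun F hF => orFactors_mem hA hF) (fun G hG => orFactors_mem hB hG)
      hndA hndB
      (fun F hF G hG h' => IHfac F G (orFactors_mem hA hF).1 (orFactors_mem hB hG).1
        (div_of_mem hndA hF) (div_of_mem hndB hG) (hsizeA F hF) (hsizeB G hG) h')
      htl
  exact Sder.trans (sder_orFactors A) (Sder.trans hmain (Sder.symm (sder_orFactors B)))

-- ===================== completeness =====================

lemma complete : ∀ (n : ℕ) (A B : Form), A.size + B.size ≤ n →
    IsAndOr A → IsAndOr B → Diversified A → Diversified B →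
    TautEquiv A B → Sder A B := by
  intro n
  induction n with
  | zero =>
    intro A B hsize _ _ _ _ _
    have := size_pos A; have := size_pos B; omega
  | succ n ih =>
    intro A B hsize hA hB hdA hdB ht
    cases A with
    | top => exact hA.elim
    | bot => exact hA.elim
    | neg A => exact hA.elim
    | var x =>
      have hset : ∀ y, y ∈ B.letters ↔ y = x := by
        intro y
        rw [← letters_iff_of_taut hA hB hdA hdB ht y]
        simp [Form.letters]
      rw [eq_var hB hdB hset]
      exact Sder.refl _
    | and A1 A2 =>
      cases B with
      | top => exact hB.elim
      | bot => exact hB.elim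
      | neg B => exact hB.elim
      | var y =>
        have hset : ∀ z, z ∈ (Form.and A1 A2).letters ↔ z = y := by
          intro z
          rw [letters_iff_of_taut hA hB hdA hdB ht z]
          simp [Form.letters]
        exact absurd (eq_var hA hdA hset) (by simp)
      | or B1 B2 =>
        exact (no_mix hB hA (fun h => h.elim) hdB hdA (fun v => (ht v).symm)).elim
      | and B1 B2 =>
        have hdual : Sder (Form.and A1 A2).dual (Form.and B1 B2).dual := by
          apply orCase (isAndOr_dual hA) (isAndOr_dual hB)
            (by unfold Diversified; rw [letters_dual]; exact hdA)
            (by unfold Diversified; rw [letters_dual]; exact hdB)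
            trivial trivial (tautEquiv_dual ht)
          intro F G hF hG hdF hdG hsF hsG htFG
          rw [size_dual] at hsF hsG
          apply ih F G ?_ hF hG hdF hdG htFG
          omega
        have := sder_dual hdual
        rwa [dual_dual, dual_dual] at this
    | or A1 A2 =>
      cases B with
      | top => exact hB.elim
      | bot => exact hB.elim
      | neg B => exact hB.elim
      | var y =>
        exact (no_mix hA hB (fun h => h.elim) hdA hdB ht).elim
      | and B1 B2 =>
        exact (no_mix hA hB (fun h => h.elim) hdA hdB ht).elim
      | or B1 B2 =>
        apply orCase hA hB hdA hdB trivial trivial ht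
        intro F G hF hG hdF hdG hsF hsG htFG
        apply ih F G ?_ hF hG hdF hdG htFG
        omega


theorem stmt4 (A B : Form) (hAO : IsAndOr A) (hBO : IsAndOr B)
    (hdA : Diversified A) (hdB : Diversified B) :
    TautEquiv A B ↔ Sder A B := by
  constructor
  · exact complete (A.size + B.size) A B le_rfl hAO hBO hdA hdB
  · exact sder_sound
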